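/- For the reduced free group RF_2 on two generators x_1, x_2, any conjugating automorphism φ ∈ Aut_C(RF_2) is determined by the pair (LK_{21}(φ), LK_{12}(φ)) ∈ Z², where φ(x_1) = λ_1⁻¹ x_1 λ_1 with λ_1 = x_2^{LK_{21}(φ)} and φ(x_2) = λ_2⁻¹ x_2 λ_2 with λ_2 = x_1^{LK_{12}(φ)}; in particular Aut_C(RF_2) ≅ Z² as a group. -/

import Mathlib

open scoped commutatorElement

/-- The defining relators of the reduced free group: commutators of a generator
with any conjugate of itself. -/
def RFrel (n : ℕ) : Set (FreeGroup (Fin n)) :=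
  {w | ∃ (i : Fin n) (g : FreeGroup (Fin n)),
    w = ⁅FreeGroup.of i, g * FreeGroup.of i * g⁻¹⁆}

/-- The reduced free group on `n` generators. -/
def RF (n : ℕ) : Type := FreeGroup (Fin n) ⧸ Subgroup.normalClosure (RFrel n)

instance (n : ℕ) : Group (RF n) := QuotientGroup.Quotient.group _

/-- The image of the `i`-th generator in the reduced free group. -/
def x {n : ℕ} (i : Fin n) : RF n := QuotientGroup.mk (FreeGroup.of i)

/-!
In `RF 2` the commutator `c = ⁅x₂, x₁⁆` is central, and `RF 2 ⧸ ⟨c⟩` is abelian, being generated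
by the commuting images of `x₁, x₂`; so every conjugate of `xᵢ` has the form `xᵢ cᵐ`. A map onto
the integral Heisenberg group shows that `c` has infinite order, so a conjugating automorphism is
determined by these two exponents. Conjugation by `x₁ᵏ x₂ᵐ` realises `x₁ ↦ x₁ c⁻ᵐ, x₂ ↦ x₂ cᵏ`,
hence `Aut_C(RF 2)` consists of inner automorphisms and is free abelian on these two twists.
-/

section

variable {G : Type*} [Group G]

lemma Subgroup.normal_of_le_center {H : Subgroup G} (h : H ≤ Subgroup.center G) : H.Normal :=
  ⟨fun _ hn g => by rwa [Subgroup.mem_center_iff.mp (h hn) g, mul_inv_cancel_right]⟩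

lemma isMulCommutative_of_closure_eq_top {s : Set G} (hs : Subgroup.closure s = ⊤)
    (hcomm : ∀ a ∈ s, ∀ b ∈ s, a * b = b * a) : IsMulCommutative G := by
  rw [← Subgroup.center_eq_top_iff, Subgroup.center_eq_iInf hs, eq_top_iff]
  refine le_iInf₂ fun b hb => ?_
  rw [← hs, Subgroup.closure_le]
  exact fun a ha => Subgroup.mem_centralizer_singleton_iff.mpr (hcomm a ha b hb)

lemma zpow_mul_mul_inv_zpow_of_commutatorElement_eq {a y z : G} (hz : z ∈ Subgroup.center G)
    (h : ⁅y, a⁆ = z) (m : ℤ) : y ^ m * a * (y ^ m)⁻¹ = z ^ m * a := by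
  have hzy : Commute z⁻¹ y := (Subgroup.mem_center_iff.mp (inv_mem hz) y).symm
  have hconj : a * y ^ m * a⁻¹ = z ^ (-m) * y ^ m := by
    rw [← conj_zpow, show a * y * a⁻¹ = z⁻¹ * y by rw [← h, commutatorElement_def]; group,
      hzy.mul_zpow, inv_zpow']
  calc y ^ m * a * (y ^ m)⁻¹ = z ^ m * (z ^ (-m) * y ^ m) * a * (y ^ m)⁻¹ := by group
    _ = z ^ m * a := by rw [← hconj]; group

end

section

variable {G ι : Type*} [Group G]

def conjugatingAut (g : ι → G) : Subgroup (MulAut G) where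
  carrier := {φ | ∀ i, ∃ w, φ (g i) = w⁻¹ * g i * w}
  one_mem' i := ⟨1, by simp⟩
  mul_mem' {φ ψ} hφ hψ i := by
    obtain ⟨v, hv⟩ := hφ i
    obtain ⟨w, hw⟩ := hψ i
    refine ⟨v * φ w, ?_⟩
    rw [MulAut.mul_apply, hw, map_mul, map_mul, map_inv, hv]
    group
  inv_mem' {φ} hφ i := by
    obtain ⟨w, hw⟩ := hφ i
    refine ⟨(φ⁻¹ w)⁻¹, ?_⟩
    apply φ.injective
    rw [inv_inv, map_mul, map_mul, map_inv, MulAut.apply_inv_self, MulAut.apply_inv_self, hw]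
    group

lemma MulAut.conj_inv_mem_conjugatingAut (g : ι → G) (w : G) :
    MulAut.conj w⁻¹ ∈ conjugatingAut g :=
  fun i => ⟨w, by rw [MulAut.conj_apply, inv_inv]⟩

end

-- `⟨p, q, r⟩` is the unitriangular matrix `[[1, q, r], [0, 1, p], [0, 0, 1]]`.
@[ext] structure Heisenberg where
  p : ℤ
  q : ℤ
  r : ℤ

namespace Heisenberg

instance : Mul Heisenberg := ⟨fun u v => ⟨u.p + v.p, u.q + v.q, u.r + v.r + u.q * v.p⟩⟩
instance : One Heisenberg := ⟨⟨0, 0, 0⟩⟩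
instance : Inv Heisenberg := ⟨fun u => ⟨-u.p, -u.q, u.p * u.q - u.r⟩⟩

@[simp] lemma mul_p (u v : Heisenberg) : (u * v).p = u.p + v.p := rfl
@[simp] lemma mul_q (u v : Heisenberg) : (u * v).q = u.q + v.q := rfl
@[simp] lemma mul_r (u v : Heisenberg) : (u * v).r = u.r + v.r + u.q * v.p := rfl
@[simp] lemma one_p : (1 : Heisenberg).p = 0 := rfl
@[simp] lemma one_q : (1 : Heisenberg).q = 0 := rfl
@[simp] lemma one_r : (1 : Heisenberg).r = 0 := rfl
@[simp] lemma inv_p (u : Heisenberg) : u⁻¹.p = -u.p := rfl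
@[simp] lemma inv_q (u : Heisenberg) : u⁻¹.q = -u.q := rfl
@[simp] lemma inv_r (u : Heisenberg) : u⁻¹.r = u.p * u.q - u.r := rfl

instance : Group Heisenberg where
  mul_assoc u v w := by ext <;> simp <;> ring
  one_mul u := by ext <;> simp
  mul_one u := by ext <;> simp
  inv_mul_cancel u := by
    ext <;> simp
    ring

lemma commute_conj_self (v h : Heisenberg) : Commute v (h * v * h⁻¹) := by
  ext <;> simp
  ring

@[simp] lemma central_zpow (m : ℤ) : (⟨0, 0, 1⟩ : Heisenberg) ^ m = ⟨0, 0, m⟩ := by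
  induction m using Int.induction_on with
  | zero => rfl
  | succ n ih => rw [zpow_add_one, ih]; ext <;> simp
  | pred n ih => rw [zpow_sub_one, ih]; ext <;> simp; ring

end Heisenberg

namespace RF

variable {n : ℕ} {G : Type*} [Group G]

abbrev mk : FreeGroup (Fin n) →* RF n := QuotientGroup.mk' (Subgroup.normalClosure (RFrel n))

lemma mk_surjective : Function.Surjective (mk : FreeGroup (Fin n) → RF n) :=
  QuotientGroup.mk'_surjective _

lemma mk_of (i : Fin n) : mk (FreeGroup.of i) = x i := rfl

lemma commute_x_conj (i : Fin n) (w : RF n) : Commute (x i) (w * x i * w⁻¹) := by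
  obtain ⟨g, rfl⟩ := mk_surjective w
  rw [← commutatorElement_eq_one_iff_commute, ← mk_of, ← map_inv, ← map_mul, ← map_mul,
    ← map_commutatorElement]
  exact (QuotientGroup.eq_one_iff _).mpr (Subgroup.subset_normalClosure ⟨i, g, rfl⟩)

def lift (f : Fin n → G) (hf : ∀ i g, Commute (f i) (g * f i * g⁻¹)) : RF n →* G :=
  QuotientGroup.lift _ (FreeGroup.lift f) <| Subgroup.normalClosure_le_normal <| by
    rintro w ⟨i, g, rfl⟩
    simp only [SetLike.mem_coe, MonoidHom.mem_ker, map_commutatorElement, map_mul, map_inv,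
      FreeGroup.lift_apply_of]
    exact commutatorElement_eq_one_iff_commute.mpr (hf i _)

@[simp] lemma lift_x (f : Fin n → G) (hf : ∀ i g, Commute (f i) (g * f i * g⁻¹)) (i : Fin n) :
    lift f hf (x i) = f i :=
  FreeGroup.lift_apply_of

lemma hom_ext {f g : RF n →* G} (h : ∀ i, f (x i) = g (x i)) : f = g :=
  QuotientGroup.monoidHom_ext _ (FreeGroup.ext_hom _ _ h)

lemma mulAut_ext {φ ψ : MulAut (RF n)} (h : ∀ i, φ (x i) = ψ (x i)) : φ = ψ :=
  MulEquiv.toMonoidHom_injective (hom_ext h)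

lemma closure_range_x : Subgroup.closure (Set.range (x : Fin n → RF n)) = ⊤ := by
  rw [show (x : Fin n → RF n) = mk ∘ FreeGroup.of from rfl, Set.range_comp,
    ← MonoidHom.map_closure, FreeGroup.closure_range_of,
    Subgroup.map_top_of_surjective _ mk_surjective]

lemma commute_x_commutatorElement_left (i j : Fin n) : Commute (x i) ⁅x i, x j⁆ := by
  have h : ⁅x i, x j⁆ = x i * (x j * x i * (x j)⁻¹)⁻¹ := by rw [commutatorElement_def]; group
  rw [h]
  exact (Commute.refl _).mul_right (commute_x_conj i (x j)).inv_right

lemma commute_x_commutatorElement_right (i j : Fin n) : Commute (x j) ⁅x i, x j⁆ :=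
  (commute_x_conj j (x i)).mul_right (Commute.refl _).inv_right

def c : RF 2 := ⁅x (1 : Fin 2), x 0⁆

lemma c_mem_center : c ∈ Subgroup.center (RF 2) := by
  rw [Subgroup.center_eq_iInf closure_range_x]
  simp only [Subgroup.mem_iInf, Set.forall_mem_range, Fin.forall_fin_two,
    Subgroup.mem_centralizer_singleton_iff]
  exact ⟨(commute_x_commutatorElement_right 1 0).symm.eq,
    (commute_x_commutatorElement_left 1 0).symm.eq⟩

instance : (Subgroup.zpowers c).Normal :=
  Subgroup.normal_of_le_center (Subgroup.zpowers_le.mpr c_mem_center)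

lemma commutator_le_zpowers_c : commutator (RF 2) ≤ Subgroup.zpowers c := by
  rw [← Subgroup.Normal.quotient_commutative_iff_commutator_le]
  let π := QuotientGroup.mk' (Subgroup.zpowers c)
  have hc : ⁅π (x 1), π (x 0)⁆ = 1 := by
    rw [← map_commutatorElement, QuotientGroup.mk'_apply, QuotientGroup.eq_one_iff]
    exact Subgroup.mem_zpowers c
  refine isMulCommutative_of_closure_eq_top (s := Set.range (π ∘ x)) ?_ ?_
  · rw [Set.range_comp, ← MonoidHom.map_closure, closure_range_x,
      Subgroup.map_top_of_surjective _ (QuotientGroup.mk'_surjective _)]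
  · simp only [Set.forall_mem_range, Fin.forall_fin_two, Function.comp_apply, true_and,
      and_true]
    have := commutatorElement_eq_one_iff_mul_comm.mp hc
    exact ⟨this.symm, this⟩

lemma exists_conj_eq_mul_zpow_c (a w : RF 2) : ∃ m : ℤ, w⁻¹ * a * w = a * c ^ m := by
  obtain ⟨m, hm⟩ := Subgroup.mem_zpowers_iff.mp <| commutator_le_zpowers_c <|
    Subgroup.commutator_mem_commutator (Subgroup.mem_top a⁻¹) (Subgroup.mem_top w⁻¹)
  exact ⟨m, by rw [hm, commutatorElement_def]; group⟩

lemma conj_x1_zpow (m : ℤ) : (x 1 ^ m)⁻¹ * x 0 * x 1 ^ m = x 0 * c ^ (-m) := by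
  have h := zpow_mul_mul_inv_zpow_of_commutatorElement_eq c_mem_center rfl (-m)
  rw [zpow_neg, inv_inv] at h
  rw [h, Subgroup.mem_center_iff.mp (zpow_mem c_mem_center _)]

lemma conj_x0_zpow (k : ℤ) : (x 0 ^ k)⁻¹ * x 1 * x 0 ^ k = x 1 * c ^ k := by
  have h := zpow_mul_mul_inv_zpow_of_commutatorElement_eq (inv_mem c_mem_center)
    (commutatorElement_inv _ _).symm (-k)
  rw [zpow_neg, inv_inv, inv_zpow', neg_neg] at h
  rw [h, Subgroup.mem_center_iff.mp (zpow_mem c_mem_center _)]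

def toHeisenberg : RF 2 →* Heisenberg :=
  lift ![⟨1, 0, 0⟩, ⟨0, 1, 0⟩] fun _ _ => Heisenberg.commute_conj_self _ _

lemma toHeisenberg_c : toHeisenberg c = ⟨0, 0, 1⟩ := by
  rw [c, map_commutatorElement, toHeisenberg, lift_x, lift_x]
  ext <;> simp [commutatorElement_def]

lemma zpow_c_injective : Function.Injective (c ^ · : ℤ → RF 2) := fun a b h => by
  simpa [toHeisenberg_c] using congrArg (fun g => (toHeisenberg g).r) h

lemma commute_c_zpow (k : ℤ) (g : RF 2) : Commute (c ^ k) g :=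
  (Subgroup.mem_center_iff.mp (zpow_mem c_mem_center k) g).symm

def twist (p : ℤ × ℤ) : MulAut (RF 2) := MulAut.conj (x 0 ^ p.2 * x 1 ^ p.1)⁻¹

lemma twist_x0 (p : ℤ × ℤ) : twist p (x 0) = x 0 * c ^ (-p.1) := by
  rw [← conj_x1_zpow, twist, MulAut.conj_apply]
  group

lemma twist_x1 (p : ℤ × ℤ) : twist p (x 1) = x 1 * c ^ p.2 :=
  calc twist p (x 1) = (x 1 ^ p.1)⁻¹ * ((x 0 ^ p.2)⁻¹ * x 1 * x 0 ^ p.2) * x 1 ^ p.1 := by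
        rw [twist, MulAut.conj_apply]; group
    _ = x 1 * c ^ p.2 := by
        rw [conj_x0_zpow, mul_assoc _ _ (x 1 ^ p.1), mul_assoc (x 1), (commute_c_zpow _ _).eq]
        group

lemma twist_c (p : ℤ × ℤ) : twist p c = c := by
  rw [twist, MulAut.conj_apply, Subgroup.mem_center_iff.mp c_mem_center, mul_inv_cancel_right]

lemma twist_eq_iff {p : ℤ × ℤ} {φ : MulAut (RF 2)} :
    twist p = φ ↔ φ (x 0) = x 0 * c ^ (-p.1) ∧ φ (x 1) = x 1 * c ^ p.2 := by
  rw [← twist_x0, ← twist_x1]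
  refine ⟨by rintro rfl; exact ⟨rfl, rfl⟩, fun ⟨h0, h1⟩ => mulAut_ext ?_⟩
  simp only [Fin.forall_fin_two, h0, h1, and_self]

lemma twist_add (p q : ℤ × ℤ) : twist (p + q) = twist p * twist q := by
  rw [twist_eq_iff, MulAut.mul_apply, MulAut.mul_apply, twist_x0, twist_x1, map_mul, map_mul,
    map_zpow, map_zpow, twist_x0, twist_x1, twist_c, mul_assoc, mul_assoc, ← zpow_add,
    ← zpow_add, Prod.fst_add, Prod.snd_add, neg_add]
  exact ⟨rfl, rfl⟩

lemma twist_injective : Function.Injective twist := by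
  intro p q h
  obtain ⟨h0, h1⟩ := twist_eq_iff.mp h
  rw [twist_x0] at h0
  rw [twist_x1] at h1
  have e0 := zpow_c_injective (mul_left_cancel h0)
  have e1 := zpow_c_injective (mul_left_cancel h1)
  exact Prod.ext (neg_inj.mp e0.symm) e1.symm

lemma exists_twist_eq_iff {φ : MulAut (RF 2)} : (∃ p, twist p = φ) ↔ φ ∈ conjugatingAut x := by
  refine ⟨fun ⟨p, hp⟩ => hp ▸ MulAut.conj_inv_mem_conjugatingAut x _, fun hφ => ?_⟩
  obtain ⟨w₀, h₀⟩ := hφ 0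
  obtain ⟨w₁, h₁⟩ := hφ 1
  obtain ⟨m, hm⟩ := exists_conj_eq_mul_zpow_c (x 0) w₀
  obtain ⟨k, hk⟩ := exists_conj_eq_mul_zpow_c (x 1) w₁
  exact ⟨(-m, k), twist_eq_iff.mpr ⟨by rw [h₀, hm, neg_neg], by rw [h₁, hk]⟩⟩

def twistHom : Multiplicative (ℤ × ℤ) →* MulAut (RF 2) :=
  MonoidHom.mk' (fun p => twist p.toAdd) fun p q => twist_add p.toAdd q.toAdd

lemma twistHom_injective : Function.Injective twistHom :=
  fun _ _ h => twist_injective h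

lemma range_twistHom : twistHom.range = conjugatingAut x := by
  ext φ
  rw [MonoidHom.mem_range, ← exists_twist_eq_iff]
  exact ⟨fun ⟨p, hp⟩ => ⟨p.toAdd, hp⟩, fun ⟨p, hp⟩ => ⟨.ofAdd p, hp⟩⟩

end RF

/-- For `RF 2`: the conjugating automorphisms form a subgroup of `Aut(RF 2)`;
every conjugating automorphism `φ` is determined by a unique pair
`(LK₂₁(φ), LK₁₂(φ)) ∈ ℤ²` with `φ(x₁) = x₂^{-m} x₁ x₂^m` and
`φ(x₂) = x₁^{-k} x₂ x₁^k`; and `Aut_C(RF 2) ≅ ℤ²` as a group. -/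
theorem stmt18 :
    ∃ S : Subgroup (MulAut (RF 2)),
      (S : Set (MulAut (RF 2))) =
        {φ | ∀ i : Fin 2, ∃ w : RF 2, φ (x i) = w⁻¹ * x i * w} ∧
      (∀ φ : MulAut (RF 2), φ ∈ S → ∃! p : ℤ × ℤ,
        φ (x (0 : Fin 2)) =
          ((x (1 : Fin 2)) ^ p.1)⁻¹ * x (0 : Fin 2) * (x (1 : Fin 2)) ^ p.1 ∧
        φ (x (1 : Fin 2)) =
          ((x (0 : Fin 2)) ^ p.2)⁻¹ * x (1 : Fin 2) * (x (0 : Fin 2)) ^ p.2) ∧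
      Nonempty (S ≃* Multiplicative (ℤ × ℤ)) := by
  refine ⟨RF.twistHom.range, by rw [RF.range_twistHom]; rfl, fun φ hφ => ?_,
    ⟨(MonoidHom.ofInjective RF.twistHom_injective).symm⟩⟩
  obtain ⟨p, hp⟩ := RF.exists_twist_eq_iff.mpr (RF.range_twistHom ▸ hφ)
  simp only [RF.conj_x1_zpow, RF.conj_x0_zpow, ← RF.twist_eq_iff]
  exact ⟨p, hp, fun q hq => RF.twist_injective (hq.trans hp.symm)⟩
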